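/- Let M=(E,ρ) be a q-matroid and V ≤ E a subspace. Then V ∩ cl(cyc(V)) = cyc(V). -/

import Mathlib

open Submodule Module

namespace QM

variable (F : Type*) {E : Type*} [Field F] [AddCommGroup E] [Module F E]

/-- The rank axioms (R1)-(R3) of a q-matroid. -/
def IsRkFn (ρ : Submodule F E → ℕ) : Prop :=
  (∀ V : Submodule F E, ρ V ≤ finrank F V) ∧
  (∀ ⦃V W : Submodule F E⦄, V ≤ W → ρ V ≤ ρ W) ∧
  (∀ V W : Submodule F E, ρ (V ⊔ W) + ρ (V ⊓ W) ≤ ρ V + ρ W)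

variable {F}

/-- Independent spaces. -/
def Indep (ρ : Submodule F E → ℕ) (V : Submodule F E) : Prop := ρ V = finrank F V

/-- Circuits: dependent spaces all of whose proper subspaces are independent. -/
def IsCircuit (ρ : Submodule F E → ℕ) (C : Submodule F E) : Prop :=
  ¬ Indep ρ C ∧ ∀ D : Submodule F E, D < C → Indep ρ D

/-- Open spaces: sums of circuits. -/
def IsOpenSp (ρ : Submodule F E → ℕ) (V : Submodule F E) : Prop :=
  ∃ S : Set (Submodule F E), (∀ C ∈ S, IsCircuit ρ C) ∧ V = sSup S

/-- The cyclic core: the sum of all circuits contained in `V`. -/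
def cyc (ρ : Submodule F E → ℕ) (V : Submodule F E) : Submodule F E :=
  sSup {C : Submodule F E | IsCircuit ρ C ∧ C ≤ V}

/-- The closure operator: the sum of all `⟨x⟩` with `ρ(V + ⟨x⟩) = ρ V`. -/
def cl (ρ : Submodule F E → ℕ) (V : Submodule F E) : Submodule F E :=
  sSup {W : Submodule F E | ∃ x : E, ρ (V ⊔ span F {x}) = ρ V ∧ W = span F {x}}

/-- Flats. -/
def IsFlat (ρ : Submodule F E → ℕ) (V : Submodule F E) : Prop :=
  ∀ x : E, x ∉ V → ρ V < ρ (V ⊔ span F {x})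

/-- Cyclic flats. -/
def CyclicFlat (ρ : Submodule F E → ℕ) (V : Submodule F E) : Prop :=
  IsFlat ρ V ∧ IsOpenSp ρ V

end QM

/-!
Write `U = cyc V` and suppose `x ∈ V ∩ cl U` but `x ∉ U`. Since `ρ (cl U) = ρ U`, adjoining `x`
does not raise the rank of `U`. Take a maximal independent `B ≤ U`; then `ρ B = ρ U = dim B`, so
`B + ⟨x⟩` is dependent and contains a circuit `C`. If `C ≤ U`, then `C ≤ (B + ⟨x⟩) ∩ U = B`, which
is independent; hence `C ≰ U`. But `C ≤ U + ⟨x⟩ ≤ V`, so `C ≤ cyc V = U`, a contradiction.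
-/

namespace QM

variable {F E : Type*} [Field F] [AddCommGroup E] [Module F E] {ρ : Submodule F E → ℕ}

lemma mem_cl_of_rk_sup_eq {U : Submodule F E} {x : E} (hx : ρ (U ⊔ span F {x}) = ρ U) :
    x ∈ cl ρ U :=
  (le_sSup ⟨x, hx, rfl⟩ : span F {x} ≤ cl ρ U) (mem_span_singleton_self x)

lemma le_cl (U : Submodule F E) : U ≤ cl ρ U := fun x hx =>
  mem_cl_of_rk_sup_eq (by rw [sup_eq_left.mpr ((span_singleton_le_iff_mem x U).mpr hx)])

lemma le_cyc {C V : Submodule F E} (hC : IsCircuit ρ C) (hCV : C ≤ V) : C ≤ cyc ρ V :=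
  le_sSup ⟨hC, hCV⟩

lemma cyc_le (V : Submodule F E) : cyc ρ V ≤ V :=
  sSup_le fun _ hC => hC.2

lemma exists_isCircuit_le [FiniteDimensional F E] {W : Submodule F E} (hW : ¬ Indep ρ W) :
    ∃ C, IsCircuit ρ C ∧ C ≤ W := by
  obtain ⟨C, hCW, hC, hmin⟩ :=
    exists_minimal_le_of_wellFoundedLT (fun D : Submodule F E => ¬ Indep ρ D) W hW
  exact ⟨C, ⟨hC, fun D hDC => by_contra fun hD => hDC.not_ge (hmin hD hDC.le)⟩, hCW⟩

namespace IsRkFn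

variable (hρ : IsRkFn F ρ)
include hρ

lemma rk_mono {V W : Submodule F E} (h : V ≤ W) : ρ V ≤ ρ W := hρ.2.1 h

lemma rk_le_finrank (V : Submodule F E) : ρ V ≤ finrank F V := hρ.1 V

lemma rk_sup_add_rk_inf_le (A B : Submodule F E) : ρ (A ⊔ B) + ρ (A ⊓ B) ≤ ρ A + ρ B :=
  hρ.2.2 A B

lemma rk_sup_le_add_finrank (U X : Submodule F E) : ρ (U ⊔ X) ≤ ρ U + finrank F X := by
  have := hρ.rk_sup_add_rk_inf_le U X
  have := hρ.rk_le_finrank X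
  omega

lemma rk_sup_eq {U A B : Submodule F E} (hA : U ≤ A) (hB : U ≤ B) (hrA : ρ A = ρ U)
    (hrB : ρ B = ρ U) : ρ (A ⊔ B) = ρ U := by
  have := hρ.rk_sup_add_rk_inf_le A B
  have := hρ.rk_mono (le_inf hA hB)
  have := hρ.rk_mono (hA.trans (le_sup_left : A ≤ A ⊔ B))
  omega

lemma rk_cl [FiniteDimensional F E] (U : Submodule F E) : ρ (cl ρ U) = ρ U := by
  obtain ⟨M, ⟨hUM, hM⟩, hmax⟩ :=
    exists_maximal_of_wellFoundedGT (fun Y : Submodule F E => U ≤ Y ∧ ρ Y = ρ U) ⟨U, le_rfl, rfl⟩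
  -- spaces above `U` of rank `ρ U` are closed under `⊔`, so the maximal one contains them all
  have hclM : cl ρ U ≤ M := by
    refine sSup_le ?_
    rintro _ ⟨x, hx, rfl⟩
    have hsup : M ⊔ (U ⊔ span F {x}) ≤ M :=
      hmax ⟨hUM.trans le_sup_left, hρ.rk_sup_eq hUM le_sup_left hM hx⟩ le_sup_left
    exact le_sup_right.trans (le_sup_right.trans hsup)
  exact le_antisymm (hM ▸ hρ.rk_mono hclM) (hρ.rk_mono (le_cl U))

lemma indep_of_le [FiniteDimensional F E] {B C : Submodule F E} (hB : Indep ρ B) (hCB : C ≤ B) :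
    Indep ρ C := by
  obtain ⟨X, hX⟩ := Submodule.exists_isCompl C
  have hsup : C ⊔ X ⊓ B = B := by rw [← sup_inf_assoc_of_le X hCB, hX.sup_eq_top, top_inf_eq]
  have hinf : C ⊓ (X ⊓ B) = ⊥ := by rw [← inf_assoc, hX.inf_eq_bot, bot_inf_eq]
  have hdim := finrank_sup_add_finrank_inf_eq C (X ⊓ B)
  have hrk := hρ.rk_sup_le_add_finrank C (X ⊓ B)
  rw [hsup, hinf, finrank_bot] at hdim
  rw [hsup] at hrk
  have := hρ.rk_le_finrank C
  unfold Indep at *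
  omega

lemma exists_indep_le_rk_eq [FiniteDimensional F E] (A : Submodule F E) :
    ∃ B ≤ A, Indep ρ B ∧ ρ B = ρ A := by
  have hbot : Indep ρ (⊥ : Submodule F E) := by
    have := hρ.rk_le_finrank ⊥
    unfold Indep
    rw [finrank_bot] at this ⊢
    omega
  obtain ⟨B, ⟨hBA, hB⟩, hmax⟩ :=
    exists_maximal_of_wellFoundedGT (fun B : Submodule F E => B ≤ A ∧ Indep ρ B) ⟨⊥, bot_le, hbot⟩
  refine ⟨B, hBA, hB, le_antisymm (hρ.rk_mono hBA) ?_⟩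
  suffices A ≤ cl ρ B from hρ.rk_cl B ▸ hρ.rk_mono this
  intro x hxA
  refine mem_cl_of_rk_sup_eq (le_antisymm ?_ (hρ.rk_mono le_sup_left))
  have hxB : B ⊔ span F {x} ≤ A := sup_le hBA ((span_singleton_le_iff_mem x A).mpr hxA)
  by_cases hind : Indep ρ (B ⊔ span F {x})
  · rw [le_antisymm (hmax ⟨hxB, hind⟩ le_sup_left) le_sup_left]
  · have hdim := finrank_add_le_finrank_add_finrank B (span F {x})
    have hx : finrank F (span F {x}) ≤ 1 := by
      simpa using finrank_span_le_card ({x} : Set E)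
    have := hρ.rk_le_finrank (B ⊔ span F {x})
    unfold Indep at *
    omega

lemma exists_isCircuit_le_sup_not_le [FiniteDimensional F E] {A : Submodule F E} {x : E}
    (hx : x ∉ A) (hrk : ρ (A ⊔ span F {x}) ≤ ρ A) :
    ∃ C, IsCircuit ρ C ∧ C ≤ A ⊔ span F {x} ∧ ¬ C ≤ A := by
  obtain ⟨B, hBA, hB, hBrk⟩ := hρ.exists_indep_le_rk_eq A
  have hx0 : x ≠ 0 := fun h => hx (h ▸ zero_mem A)
  have hdisj : Disjoint A (span F {x}) := (disjoint_span_singleton' hx0).mpr hx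
  have hWA : B ⊔ span F {x} ≤ A ⊔ span F {x} := sup_le_sup_right hBA _
  have hdep : ¬ Indep ρ (B ⊔ span F {x}) := by
    have hdim := finrank_sup_add_finrank_inf_eq B (span F {x})
    rw [(hdisj.mono_left hBA).eq_bot, finrank_bot, finrank_span_singleton hx0] at hdim
    have := hρ.rk_mono hWA
    unfold Indep at *
    omega
  obtain ⟨C, hC, hCW⟩ := exists_isCircuit_le hdep
  refine ⟨C, hC, hCW.trans hWA, fun hCA => hC.1 (hρ.indep_of_le hB ?_)⟩
  calc C ≤ (B ⊔ span F {x}) ⊓ A := le_inf hCW hCA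
    _ = B := by rw [sup_inf_assoc_of_le _ hBA, inf_comm, hdisj.eq_bot, sup_bot_eq]

end IsRkFn

end QM

namespace QM

variable {F E : Type*} [Field F] [Fintype F] [AddCommGroup E] [Module F E]
  [FiniteDimensional F E]

theorem stmt8 (ρ : Submodule F E → ℕ) (hρ : IsRkFn F ρ) (V : Submodule F E) :
    V ⊓ cl ρ (cyc ρ V) = cyc ρ V := by
  set U := cyc ρ V
  refine le_antisymm (fun x hx => ?_) (le_inf (cyc_le V) (le_cl U))
  obtain ⟨hxV, hxcl⟩ := mem_inf.mp hx
  by_contra hxU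
  have hrk : ρ (U ⊔ span F {x}) ≤ ρ U :=
    hρ.rk_cl U ▸ hρ.rk_mono (sup_le (le_cl U) ((span_singleton_le_iff_mem x _).mpr hxcl))
  obtain ⟨C, hC, hCle, hCU⟩ := hρ.exists_isCircuit_le_sup_not_le hxU hrk
  have hUxV : U ⊔ span F {x} ≤ V := sup_le (cyc_le V) ((span_singleton_le_iff_mem x V).mpr hxV)
  exact hCU (le_cyc hC (hCle.trans hUxV))

end QM
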